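/- L¹ control of the electric field by the truncated energy and the number of points: There is a universal constant K such that for every N ≥ 2, every configuration X_N of pairwise distinct points of ℝ², every compactly supported probability measure μ₀ with bounded density, and every bounded measurable set Ω ⊂ ℝ²: ∫_Ω |∇h^{μ₀}(z)| dz ≤ Leb(Ω)^{1/2}·(∫_Ω |E_{r⃗}|²)^{1/2} + K·Points(Ω)·N^{-1/2}, where Leb(Ω) is the Lebesgue measure of Ω. In particular ∇h^{μ₀} is integrable on Ω. -/

import Mathlib

open MeasureTheory Filter Metric
open scoped Topology ENNReal NNReal RealInnerProductSpace BigOperators Classical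

noncomputable section

/-- The plane `ℝ²`. -/
abbrev R2 : Type := EuclideanSpace ℝ (Fin 2)

/-- Fluctuation of the linear statistics associated to `φ`:
`⟨φ, M_N⟩ = ∑ φ(x_i) − N ∫ φ dμ`. -/
def fluct {N : ℕ} (X : Fin N → R2) (φ : R2 → ℝ) (μ : Measure R2) : ℝ :=
  (∑ i, φ (X i)) - (N : ℝ) * ∫ x, φ x ∂μ

/-- The 2D Coulomb energy `F(X_N, μ)`, written out by expanding the square
(off-diagonal point-point terms, cross terms, background-background term). -/
def coulombF {N : ℕ} (X : Fin N → R2) (μ : Measure R2) : ℝ :=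
  (1/2) * ((∑ i, ∑ j ∈ Finset.univ.erase i, -Real.log (dist (X i) (X j)))
    - 2 * (N : ℝ) * ∑ i, ∫ y, -Real.log (dist (X i) y) ∂μ
    + (N : ℝ)^2 * ∫ x, ∫ y, -Real.log (dist x y) ∂μ ∂μ)

/-- `∇_z log |z − x| = (z−x)/|z−x|²`. -/
def gradLog (z x : R2) : R2 := (dist z x ^ 2)⁻¹ • (z - x)

/-- The electric field `∇h^μ(z) = ∑ᵢ −∇log|z−xᵢ| − N ∫ −∇log|z−x| dμ(x)`. -/
def elecField {N : ℕ} (X : Fin N → R2) (μ : Measure R2) (z : R2) : R2 :=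
  -(∑ i, gradLog z (X i)) + (N : ℝ) • ∫ x, gradLog z x ∂μ

/-- `∇f_η(z)` where `f_η(z) = (log η − log|z|)₊`. -/
def gradTrunc (η : ℝ) (z : R2) : R2 := if ‖z‖ < η then -((‖z‖^2)⁻¹ • z) else 0

/-- The truncated electric field `∇h^μ_{η⃗}`. -/
def truncField {N : ℕ} (X : Fin N → R2) (μ : Measure R2) (η : Fin N → ℝ) (z : R2) : R2 :=
  elecField X μ z - ∑ i, gradTrunc (η i) (z - X i)

/-- Divergence of a vector field on `ℝ²`. -/
def div2 (ψ : R2 → R2) (x : R2) : ℝ :=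
  ∑ i, fderiv ℝ ψ x (EuclideanSpace.single i 1) i

/-- Laplacian on `ℝ²`. -/
def lap (f : R2 → ℝ) (x : R2) : ℝ := div2 (gradient f) x

/-- The integrand `⟨E, (2Dψ − (div ψ) Id) E⟩`. -/
def aniIntegrand (ψ : R2 → R2) (E : R2 → R2) (z : R2) : ℝ :=
  (inner ℝ (E z) ((2 : ℝ) • fderiv ℝ ψ z (E z) - div2 ψ z • E z) : ℝ)

/-- The anisotropy term
`Ani(X_N, μ, ψ) = ½ lim_{η→0⁺} (1/2π) ∫ ⟨∇h^μ_η, (2Dψ − (div ψ)Id) ∇h^μ_η⟩`. -/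
def Ani {N : ℕ} (X : Fin N → R2) (μ : Measure R2) (ψ : R2 → R2) : ℝ :=
  limUnder (𝓝[>] (0 : ℝ)) fun η =>
    (1/2) * ((2 * Real.pi)⁻¹ * ∫ z, aniIntegrand ψ (truncField X μ fun _ => η) z)

/-- `𝖠(X_N, μ, ψ) = Ani(X_N, μ, ψ) + ¼ ∑ div ψ(xᵢ)`. -/
def AniA {N : ℕ} (X : Fin N → R2) (μ : Measure R2) (ψ : R2 → R2) : ℝ :=
  Ani X μ ψ + (1/4) * ∑ i, div2 ψ (X i)

/-- Nearest-neighbour truncation distance `rᵢ = ¼ min(N^{-1/2}, min_{j≠i} |xᵢ−xⱼ|)`. -/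
def nnr {N : ℕ} (X : Fin N → R2) (i : Fin N) : ℝ :=
  (1/4) * min (1 / Real.sqrt N) (sInf {d | ∃ j, j ≠ i ∧ d = dist (X i) (X j)})

/-- Electric energy `Ele(Ω) = ∫_Ω |E_{r⃗}|²`. -/
def Ele {N : ℕ} (X : Fin N → R2) (μ : Measure R2) (Ω : Set R2) : ℝ :=
  ∫ z in Ω, ‖truncField X μ (nnr X) z‖^2

/-- Number of points within `N^{-1/2}` of `Ω`. -/
def Points {N : ℕ} (X : Fin N → R2) (Ω : Set R2) : ℕ :=
  Set.ncard {i : Fin N | infDist (X i) Ω ≤ 1 / Real.sqrt N}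

/-- The equilibrium measure setting: a probability density `m0` on `ℝ²` with compact
support `supp` which is the closure of its interior, with piecewise `C¹` boundary,
density bounded below by `cmin > 0` on `supp`, and `C³` on `supp`. -/
structure EqMeasure where
  m0 : R2 → ℝ
  supp : Set R2
  cmin : ℝ
  cmin_pos : 0 < cmin
  isCompact : IsCompact supp
  closure_int : supp = closure (interior supp)
  boundary_C1 : ∃ (n : ℕ) (γ : Fin n → ℝ → R2),
      (∀ i, ContDiffOn ℝ 1 (γ i) (Set.Icc 0 1)) ∧
      frontier supp = ⋃ i, γ i '' Set.Icc (0:ℝ) 1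
  m0_nonneg : ∀ x, 0 ≤ m0 x
  m0_lower : ∀ x ∈ supp, cmin ≤ m0 x
  m0_zero : ∀ x, x ∉ supp → m0 x = 0
  m0_C3 : ContDiffOn ℝ 3 m0 supp
  m0_prob : (∫ x, m0 x) = 1

/-- The equilibrium measure `μ₀ = m₀ · Leb`. -/
def EqMeasure.meas (E : EqMeasure) : Measure R2 :=
  volume.withDensity fun x => ENNReal.ofReal (E.m0 x)

/-- A confining potential for `μ₀`: continuous, vanishing on `Σ`, positive outside,
with `liminf_{|x|→∞} ζ(x)/log|x| > 2`. -/
def IsConfining (E : EqMeasure) (ζ : R2 → ℝ) : Prop :=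
  Continuous ζ ∧ (∀ x ∈ E.supp, ζ x = 0) ∧ (∀ x, x ∉ E.supp → 0 < ζ x) ∧
  ∃ c, 2 < c ∧ ∀ᶠ x : R2 in cocompact R2, c * Real.log ‖x‖ ≤ ζ x

/-- Total energy `F(X_N, μ₀) + ζ⃗(X_N)`. -/
def energyTotal {N : ℕ} (E : EqMeasure) (ζ : R2 → ℝ) (X : Fin N → R2) : ℝ :=
  coulombF X E.meas + 2 * (N : ℝ) * ∑ i, ζ (X i)

/-- Partition function `Z_N^β`. -/
def partitionZ (E : EqMeasure) (β : ℝ) (ζ : R2 → ℝ) (N : ℕ) : ℝ :=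
  ∫ X : Fin N → R2, Real.exp (-β * energyTotal E ζ X)

/-- The canonical Gibbs measure `ℙ_N^β`, with density
`(Z_N^β)⁻¹ exp(−β(F(X_N,μ₀) + ζ⃗(X_N)))` with respect to Lebesgue measure. -/
def gibbs (E : EqMeasure) (β : ℝ) (ζ : R2 → ℝ) (N : ℕ) : Measure (Fin N → R2) :=
  (ENNReal.ofReal (partitionZ E β ζ N)⁻¹) •
    (volume.withDensity fun X => ENNReal.ofReal (Real.exp (-β * energyTotal E ζ X)))

/-- The Gibbs density is integrable and the partition function is positive,
i.e. `Z_N^β ∈ (0, ∞)`. -/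
def GibbsOK (E : EqMeasure) (β : ℝ) (ζ : R2 → ℝ) : Prop :=
  ∀ N : ℕ, 2 ≤ N →
    Integrable (fun X : Fin N → R2 => Real.exp (-β * energyTotal E ζ X)) ∧
    0 < partitionZ E β ζ N

/-- Characteristic function of the fluctuation: `F_N(ω) = E[e^{iω⟨φ,M_N⟩}]`. -/
def charFn {N : ℕ} (P : Measure (Fin N → R2)) (φ : R2 → ℝ) (μ : Measure R2) (ω : ℝ) : ℂ :=
  ∫ X, Complex.exp (Complex.I * (ω : ℂ) * (fluct X φ μ : ℂ)) ∂P

/-- The transport vector field `∇φ/m₀`, extended by `0` outside `supp φ`. -/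
def transportField (E : EqMeasure) (φ : R2 → ℝ) (x : R2) : R2 :=
  if x ∈ tsupport φ then (E.m0 x)⁻¹ • gradient φ x else 0

/-- The rescaled test function `φ̄((· − c)/ℓ)`. -/
def scaledTest (φb : R2 → ℝ) (ℓ : ℝ) (c : R2) (x : R2) : ℝ := φb (ℓ⁻¹ • (x - c))

/-- The two admissible families of test functions: either macroscopic (`ℓ_N = 1`,
centers `0`, `supp φ̄ ⊆ int Σ`) or mesoscopic (`N^{-1/2} ≪ ℓ_N ≪ 1`, centers in `Σ`
at distance at least `d₀` from `∂Σ`). -/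
def TestFamily (E : EqMeasure) (φb : R2 → ℝ) (d0 : ℝ) (ℓ : ℕ → ℝ) (c : ℕ → R2) : Prop :=
  ((∀ N, ℓ N = 1 ∧ c N = 0) ∧ tsupport φb ⊆ interior E.supp) ∨
  ((∀ N, 0 < ℓ N) ∧ Tendsto (fun N : ℕ => 1 / (Real.sqrt N * ℓ N)) atTop (𝓝 0) ∧
    Tendsto ℓ atTop (𝓝 0) ∧
    ∀ N, c N ∈ E.supp ∧ d0 ≤ infDist (c N) (frontier E.supp))

/-- `G(ω) = E[e^{iω⟨φ,M_N⟩} Ani(X_N, μ₀, ∇φ/m₀)]`. -/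
def aniChar {N : ℕ} (P : Measure (Fin N → R2)) (E : EqMeasure) (φ : R2 → ℝ) (ω : ℝ) : ℂ :=
  ∫ X, Complex.exp (Complex.I * (ω : ℂ) * (fluct X φ E.meas : ℂ))
    * (Ani X E.meas (transportField E φ) : ℂ) ∂P

end

/-!
Write `∇h^{μ₀} = E_{r⃗} + ∑ᵢ ∇f_{rᵢ}(· - xᵢ)`. The truncated field is bounded: each
`-∇log|z - xᵢ| - ∇f_{rᵢ}(z - xᵢ)` vanishes for `|z - xᵢ| < rᵢ` and is at most `1/rᵢ` otherwise,
and the background term is bounded since `μ₀` has bounded density. Hence Cauchy–Schwarz on `Ω`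
bounds its contribution. Each `∇f_{rᵢ}(· - xᵢ)` has `L¹` norm `2πrᵢ ≤ (π/2) N^{-1/2}` and vanishes
on `Ω` unless `xᵢ` lies within `rᵢ ≤ N^{-1/2}` of `Ω`, which gives `K = π/2`.
-/

open Real

lemma norm_inv_norm_sq_smul {E : Type*} [NormedAddCommGroup E] [NormedSpace ℝ E] (v : E) :
    ‖(‖v‖ ^ 2)⁻¹ • v‖ = ‖v‖⁻¹ := by
  rcases eq_or_ne v 0 with rfl | hv
  · simp
  · rw [norm_smul, norm_inv, norm_pow, norm_norm]
    field_simp [norm_ne_zero_iff.2 hv]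

lemma integral_norm_le_sqrt_mul_sqrt_integral_norm_sq {α E : Type*} [MeasurableSpace α]
    [NormedAddCommGroup E] {ν : Measure α} [IsFiniteMeasure ν] {f : α → E} (hf : MemLp f 2 ν) :
    ∫ a, ‖f a‖ ∂ν ≤ √(ν.real Set.univ) * √(∫ a, ‖f a‖ ^ 2 ∂ν) := by
  have hf' : MemLp f (ENNReal.ofReal 2) ν := by rwa [ENNReal.ofReal_ofNat]
  have h := integral_mul_norm_le_Lp_mul_Lq HolderConjugate.two_two hf'.norm
    (memLp_const (1 : ℝ))
  simp only [norm_norm, norm_one, mul_one, integral_const, smul_eq_mul,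
    rpow_two] at h
  rw [sqrt_eq_rpow, sqrt_eq_rpow, mul_comm]
  simpa using h

lemma integral_norm_add_sum_le {α E ι : Type*} [MeasurableSpace α] [NormedAddCommGroup E]
    [NormedSpace ℝ E] {ν : Measure α} [IsFiniteMeasure ν] (s : Finset ι) {f : α → E}
    {g : ι → α → E} (hf : MemLp f 2 ν) (hg : ∀ i ∈ s, Integrable (g i) ν) :
    ∫ a, ‖f a + ∑ i ∈ s, g i a‖ ∂ν ≤
      √(ν.real Set.univ) * √(∫ a, ‖f a‖ ^ 2 ∂ν) + ∑ i ∈ s, ∫ a, ‖g i a‖ ∂ν := by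
  have hgn : ∀ i ∈ s, Integrable (fun a => ‖g i a‖) ν := fun i hi => (hg i hi).norm
  have hfn : Integrable (fun a => ‖f a‖) ν := (hf.integrable one_le_two).norm
  calc ∫ a, ‖f a + ∑ i ∈ s, g i a‖ ∂ν ≤ ∫ a, ‖f a‖ + ∑ i ∈ s, ‖g i a‖ ∂ν :=
        integral_mono_of_nonneg (ae_of_all _ fun _ => norm_nonneg _)
          (hfn.add (integrable_finsetSum s hgn))
          (ae_of_all _ fun a => (norm_add_le _ _).trans (add_le_add_right (norm_sum_le _ _) _))
    _ = ∫ a, ‖f a‖ ∂ν + ∑ i ∈ s, ∫ a, ‖g i a‖ ∂ν := by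
        rw [integral_add hfn (integrable_finsetSum s hgn), integral_finsetSum s hgn]
    _ ≤ _ := add_le_add_left (integral_norm_le_sqrt_mul_sqrt_integral_norm_sq hf) _

section GradLog

lemma gradLog_eq (z x : R2) : gradLog z x = (‖z - x‖ ^ 2)⁻¹ • (z - x) := by
  rw [gradLog, dist_eq_norm]

lemma norm_gradLog (z x : R2) : ‖gradLog z x‖ = ‖z - x‖⁻¹ := by
  rw [gradLog_eq, norm_inv_norm_sq_smul]

lemma norm_gradTrunc (η : ℝ) (w : R2) :
    ‖gradTrunc η w‖ = if ‖w‖ < η then ‖w‖⁻¹ else 0 := by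
  unfold gradTrunc
  split_ifs <;> simp [norm_inv_norm_sq_smul]

lemma measurable_gradLog : Measurable (Function.uncurry gradLog) := by
  unfold Function.uncurry gradLog
  fun_prop

lemma measurable_gradTrunc (η : ℝ) : Measurable (gradTrunc η) := by
  unfold gradTrunc
  exact Measurable.ite (measurableSet_lt measurable_norm measurable_const)
    ((measurable_norm.pow_const 2).inv.smul measurable_id).neg measurable_const

lemma eqOn_polar_norm_gradTrunc (η : ℝ) :
    Set.EqOn (fun r : ℝ => r ^ (Module.finrank ℝ R2 - 1) • if r < η then r⁻¹ else 0)
      ((Set.Iio η).indicator 1) (Set.Ioi 0) := by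
  intro r (hr : 0 < r)
  simp only [finrank_euclideanSpace_fin, smul_eq_mul, Set.indicator, Set.mem_Iio]
  split_ifs <;> simp [hr.ne']

lemma integrable_gradTrunc (η : ℝ) : Integrable (gradTrunc η) := by
  rw [← integrable_norm_iff (measurable_gradTrunc η).aestronglyMeasurable,
    funext (norm_gradTrunc η),
    integrable_fun_norm_addHaar volume (f := fun r => if r < η then r⁻¹ else 0),
    integrableOn_congr_fun (eqOn_polar_norm_gradTrunc η) measurableSet_Ioi,
    IntegrableOn, integrable_indicator_iff measurableSet_Iio]
  refine integrableOn_const ?_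
  rw [Measure.restrict_apply measurableSet_Iio, Set.Iio_inter_Ioi, Real.volume_Ioo]
  exact ENNReal.ofReal_ne_top

lemma integral_norm_gradTrunc {η : ℝ} (hη : 0 ≤ η) : ∫ w, ‖gradTrunc η w‖ = 2 * π * η := by
  rw [funext (norm_gradTrunc η),
    integral_fun_norm_addHaar volume (fun r => if r < η then r⁻¹ else 0),
    setIntegral_congr_fun measurableSet_Ioi (eqOn_polar_norm_gradTrunc η),
    setIntegral_indicator measurableSet_Iio]
  simp [Measure.real, Set.Ioi_inter_Iio, hη, pi_nonneg]
  ring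

lemma lintegral_norm_gradTrunc_sub {η : ℝ} (hη : 0 ≤ η) (a : R2) :
    ∫⁻ z, ENNReal.ofReal ‖gradTrunc η (z - a)‖ = ENNReal.ofReal (2 * π * η) := by
  rw [← integral_norm_gradTrunc hη, ← integral_sub_right_eq_self _ a,
    ofReal_integral_eq_lintegral_ofReal ((integrable_gradTrunc η).comp_sub_right a).norm
      (ae_of_all _ fun _ => norm_nonneg _)]

lemma norm_gradLog_le (z x : R2) : ‖gradLog z x‖ ≤ ‖gradTrunc 1 (x - z)‖ + 1 := by
  rw [norm_gradLog, norm_gradTrunc, norm_sub_rev]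
  split_ifs with h
  · linarith
  · simpa using inv_le_one_of_one_le₀ (not_lt.1 h)

/-- The near part is at most `B ∫ |∇f_1| = 2πB`, the far part at most `μ(ℝ²) = 1`. -/
lemma norm_integral_gradLog_le {μ : Measure R2} [IsProbabilityMeasure μ] {B : ℝ≥0}
    (hμ : μ ≤ (B : ℝ≥0∞) • volume) (z : R2) :
    ‖∫ x, gradLog z x ∂μ‖ ≤ 2 * π * B + 1 := by
  refine (norm_integral_le_lintegral_norm _).trans (ENNReal.toReal_le_of_le_ofReal
    (by positivity) ?_)
  calc ∫⁻ x, ENNReal.ofReal ‖gradLog z x‖ ∂μ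
      ≤ ∫⁻ x, ENNReal.ofReal ‖gradTrunc 1 (x - z)‖ + 1 ∂μ :=
        lintegral_mono fun x => (ENNReal.ofReal_le_ofReal (norm_gradLog_le z x)).trans
          (ENNReal.ofReal_add_le.trans_eq (by rw [ENNReal.ofReal_one]))
    _ = (∫⁻ x, ENNReal.ofReal ‖gradTrunc 1 (x - z)‖ ∂μ) + 1 := by
        rw [lintegral_add_right _ measurable_const, lintegral_const, measure_univ, mul_one]
    _ ≤ B * (∫⁻ x, ENNReal.ofReal ‖gradTrunc 1 (x - z)‖) + 1 := by
        grw [lintegral_mono' hμ le_rfl, lintegral_smul_measure, smul_eq_mul]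
    _ = ENNReal.ofReal (2 * π * B + 1) := by
        rw [lintegral_norm_gradTrunc_sub zero_le_one, ENNReal.ofReal_add (by positivity) zero_le_one,
          ENNReal.ofReal_one, mul_one, mul_comm (2 * π), ENNReal.ofReal_mul B.coe_nonneg,
          ENNReal.ofReal_coe_nnreal]

lemma norm_neg_gradLog_sub_gradTrunc_le {η : ℝ} (hη : 0 < η) (z x : R2) :
    ‖-gradLog z x - gradTrunc η (z - x)‖ ≤ η⁻¹ := by
  by_cases h : ‖z - x‖ < η
  · rw [gradLog_eq, gradTrunc, if_pos h, sub_neg_eq_add, neg_add_cancel, norm_zero]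
    positivity
  · rw [gradTrunc, if_neg h, sub_zero, norm_neg, norm_gradLog]
    exact inv_anti₀ hη (not_lt.1 h)

end GradLog

section TruncField

variable {N : ℕ} (X : Fin N → R2) (μ : Measure R2) (η : Fin N → ℝ)

lemma truncField_eq_sum_add (z : R2) :
    truncField X μ η z =
      ∑ i, (-gradLog z (X i) - gradTrunc (η i) (z - X i)) + (N : ℝ) • ∫ x, gradLog z x ∂μ := by
  simp only [truncField, elecField, Finset.sum_sub_distrib, Finset.sum_neg_distrib]
  abel

lemma elecField_eq_truncField_add (z : R2) :
    elecField X μ z = truncField X μ η z + ∑ i, gradTrunc (η i) (z - X i) := by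
  rw [truncField, sub_add_cancel]

lemma stronglyMeasurable_truncField [SFinite μ] : StronglyMeasurable (truncField X μ η) := by
  have hsum : Measurable fun z => ∑ i, (-gradLog z (X i) - gradTrunc (η i) (z - X i)) :=
    Finset.measurable_sum _ fun i _ =>
      (measurable_gradLog.comp (measurable_id.prodMk measurable_const)).neg.sub
        ((measurable_gradTrunc _).comp (measurable_id.sub measurable_const))
  have hbg : StronglyMeasurable fun z => ∫ x, gradLog z x ∂μ :=
    measurable_gradLog.stronglyMeasurable.integral_prod_right'
  rw [funext (truncField_eq_sum_add X μ η)]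
  exact hsum.stronglyMeasurable.add (hbg.const_smul (N : ℝ))

variable {X μ η}

lemma norm_truncField_le [IsProbabilityMeasure μ] {B : ℝ≥0} (hμ : μ ≤ (B : ℝ≥0∞) • volume)
    (hη : ∀ i, 0 < η i) (z : R2) :
    ‖truncField X μ η z‖ ≤ ∑ i, (η i)⁻¹ + N * (2 * π * B + 1) := by
  rw [truncField_eq_sum_add]
  refine (norm_add_le _ _).trans (add_le_add ?_ ?_)
  · exact (norm_sum_le _ _).trans
      (Finset.sum_le_sum fun i _ => norm_neg_gradLog_sub_gradTrunc_le (hη i) z (X i))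
  · rw [norm_smul, Real.norm_natCast]
    exact mul_le_mul_of_nonneg_left (norm_integral_gradLog_le hμ z) N.cast_nonneg

lemma memLp_truncField [IsProbabilityMeasure μ] {B : ℝ≥0} (hμ : μ ≤ (B : ℝ≥0∞) • volume)
    (hη : ∀ i, 0 < η i) (ν : Measure R2) [IsFiniteMeasure ν] (p : ℝ≥0∞) :
    MemLp (truncField X μ η) p ν :=
  MemLp.of_bound (stronglyMeasurable_truncField X μ η).aestronglyMeasurable _
    (ae_of_all _ (norm_truncField_le hμ hη))

end TruncField

section NearestNeighbour

variable {N : ℕ} {X : Fin N → R2}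

lemma nnr_pos (hN : 2 ≤ N) (hX : Function.Injective X) (i : Fin N) : 0 < nnr X i := by
  have : Nontrivial (Fin N) := Fin.nontrivial_iff_two_le.2 hN
  have hfin : {d | ∃ j, j ≠ i ∧ d = dist (X i) (X j)}.Finite :=
    (Set.finite_range fun j => dist (X i) (X j)).subset fun d ⟨j, _, hd⟩ => ⟨j, hd.symm⟩
  obtain ⟨j, hj⟩ := exists_ne i
  have hne : {d | ∃ j, j ≠ i ∧ d = dist (X i) (X j)}.Nonempty := ⟨_, j, hj, rfl⟩
  obtain ⟨k, hk, hdk⟩ := hne.csInf_mem hfin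
  have hsep : 0 < dist (X i) (X k) := dist_pos.2 fun h => hk (hX h).symm
  have hN' : (0 : ℝ) < N := by exact_mod_cast (by omega : 0 < N)
  rw [nnr, hdk]
  positivity

lemma nnr_le (i : Fin N) : nnr X i ≤ 1 / 4 * (1 / √N) :=
  mul_le_mul_of_nonneg_left (min_le_left _ _) (by norm_num)

end NearestNeighbour

section Tails

lemma setIntegral_norm_gradTrunc_sub_eq_zero {Ω : Set R2} {a : R2} {η : ℝ}
    (h : η ≤ infDist a Ω) : ∫ z in Ω, ‖gradTrunc η (z - a)‖ = 0 := by
  refine setIntegral_eq_zero_of_forall_eq_zero fun z hz => ?_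
  rw [norm_gradTrunc, if_neg (not_lt.2 ?_)]
  rw [← dist_eq_norm, dist_comm]
  exact h.trans (infDist_le_dist_of_mem hz)

lemma setIntegral_norm_gradTrunc_sub_le (Ω : Set R2) (a : R2) {η : ℝ} (hη : 0 ≤ η) :
    ∫ z in Ω, ‖gradTrunc η (z - a)‖ ≤ 2 * π * η := by
  rw [← integral_norm_gradTrunc hη, ← integral_sub_right_eq_self (fun w => ‖gradTrunc η w‖) a]
  exact setIntegral_le_integral ((integrable_gradTrunc η).comp_sub_right a).norm
    (ae_of_all _ fun _ => norm_nonneg _)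

lemma points_eq_card_filter {N : ℕ} (X : Fin N → R2) (Ω : Set R2) :
    Points X Ω = (Finset.univ.filter fun i => infDist (X i) Ω ≤ 1 / √N).card := by
  rw [Points, ← Set.ncard_coe_finset, Finset.coe_filter]
  simp

lemma sum_setIntegral_norm_gradTrunc_nnr_le {N : ℕ} {X : Fin N → R2} (hN : 2 ≤ N)
    (hX : Function.Injective X) (Ω : Set R2) :
    ∑ i, ∫ z in Ω, ‖gradTrunc (nnr X i) (z - X i)‖ ≤ Points X Ω * (π / 2 / √N) := by
  rw [← Finset.sum_filter_of_ne (p := fun i => infDist (X i) Ω ≤ 1 / √N), points_eq_card_filter,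
    ← nsmul_eq_mul]
  · refine Finset.sum_le_card_nsmul _ _ _ fun i _ => ?_
    calc ∫ z in Ω, ‖gradTrunc (nnr X i) (z - X i)‖ ≤ 2 * π * nnr X i :=
          setIntegral_norm_gradTrunc_sub_le Ω (X i) (nnr_pos hN hX i).le
      _ ≤ 2 * π * (1 / 4 * (1 / √N)) := by gcongr; exact nnr_le i
      _ = π / 2 / √N := by ring
  · intro i _ hi
    by_contra hfar
    exact hi (setIntegral_norm_gradTrunc_sub_eq_zero
      ((nnr_le i).trans (by linarith [not_le.1 hfar, (by positivity : (0 : ℝ) ≤ 1 / √N)])))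

end Tails

/-- `L¹` control of the electric field by the truncated energy and
the number of points, with a universal constant `K`. -/
theorem elecField_L1_control :
    ∃ K > 0, ∀ (N : ℕ), 2 ≤ N → ∀ X : Fin N → R2, Function.Injective X →
      ∀ μ : Measure R2, IsProbabilityMeasure μ →
      ∀ m : R2 → ℝ, μ = volume.withDensity (fun x => ENNReal.ofReal (m x)) →
      (∃ B, ∀ x, |m x| ≤ B) → IsCompact (tsupport m) →
      ∀ Ω : Set R2, MeasurableSet Ω → Bornology.IsBounded Ω →
        IntegrableOn (fun z => ‖elecField X μ z‖) Ω volume ∧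
        (∫ z in Ω, ‖elecField X μ z‖) ≤
          Real.sqrt (volume Ω).toReal * Real.sqrt (Ele X μ Ω)
            + K * (Points X Ω : ℝ) / Real.sqrt N := by
  refine ⟨π / 2, by positivity, fun N hN X hX μ _ m hm ⟨B, hB⟩ _ Ω _ hΩ => ?_⟩
  have hμB : μ ≤ (B.toNNReal : ℝ≥0∞) • volume := by
    rw [hm, ← withDensity_const]
    exact withDensity_mono (ae_of_all _ fun x =>
      ENNReal.ofReal_le_ofReal ((le_abs_self _).trans (hB x)))
  have : IsFiniteMeasure (volume.restrict Ω) :=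
    isFiniteMeasure_restrict.2 hΩ.measure_lt_top.ne
  have hT : MemLp (truncField X μ (nnr X)) 2 (volume.restrict Ω) :=
    memLp_truncField hμB (nnr_pos hN hX) _ _
  have hg : ∀ i ∈ Finset.univ, Integrable (fun z => gradTrunc (nnr X i) (z - X i))
      (volume.restrict Ω) := fun i _ => ((integrable_gradTrunc _).comp_sub_right _).restrict
  rw [funext (elecField_eq_truncField_add X μ (nnr X))]
  refine ⟨((hT.integrable one_le_two).add (integrable_finsetSum _ hg)).norm, ?_⟩
  calc _ ≤ √(volume Ω).toReal * √(Ele X μ Ω)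
        + ∑ i, ∫ z in Ω, ‖gradTrunc (nnr X i) (z - X i)‖ := by
        rw [← measureReal_def, ← measureReal_restrict_apply_univ]
        exact integral_norm_add_sum_le _ hT hg
    _ ≤ √(volume Ω).toReal * √(Ele X μ Ω) + Points X Ω * (π / 2 / √N) :=
        add_le_add_right (sum_setIntegral_norm_gradTrunc_nnr_le hN hX Ω) _
    _ = _ := by ring
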